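/- arXiv:2211.13917 — 5 statements merged into one kernel-verified Lean document; each statement's English description precedes it below -/
import Mathlib

section
/- Fix b > 1 and L > 0, set C = (b^{α+1} − L b^α)/(p₁ b^{p₂} − p₂ b^{p₁}) and V̂(y) = C(p₁ y^{p₂} − p₂ y^{p₁}). Then p₁ b^{p₂} − p₂ b^{p₁} > 0; V̂ satisfies the Cauchy–Euler equation (σ²/2) y² V̂''(y) − r y V̂'(y) − λ V̂(y) = 0 for every y ∈ (1, b); V̂(b) = (b − L) b^α (value matching); and V̂'(1) = 0 (normal reflection). -/
set_option maxHeartbeats 1000000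


/-- Fix `b > 1` and `L > 0`, set
`C = (b^(α+1) − L b^α)/(p₁ b^(p₂) − p₂ b^(p₁))` and
`V̂(y) = C (p₁ y^(p₂) − p₂ y^(p₁))`.  Then the denominator is positive, `V̂`
satisfies the Cauchy–Euler equation `(σ²/2) y² V̂'' − r y V̂' − λ V̂ = 0` on
`(1, b)`, value matching `V̂(b) = (b − L) b^α` holds, and `V̂'(1) = 0`. -/
theorem stmt_5 (r σ lam α p₁ p₂ b L C : ℝ) (V : ℝ → ℝ)
    (hr : 0 < r) (hσ : 0 < σ) (hlam : 0 < lam)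
    (hα : α = 2*r/σ^2 - 1)
    (hp₁ : p₁ = ((r + σ^2/2) + Real.sqrt ((r + σ^2/2)^2 + 2*lam*σ^2)) / σ^2)
    (hp₂ : p₂ = ((r + σ^2/2) - Real.sqrt ((r + σ^2/2)^2 + 2*lam*σ^2)) / σ^2)
    (hb : 1 < b) (hL : 0 < L)
    (hC : C = (b^(α+1) - L * b^α) / (p₁ * b^p₂ - p₂ * b^p₁))
    (hV : ∀ y : ℝ, V y = C * (p₁ * y^p₂ - p₂ * y^p₁)) :
    0 < p₁ * b^p₂ - p₂ * b^p₁ ∧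
    (∀ y ∈ Set.Ioo (1:ℝ) b,
      σ^2/2 * y^2 * deriv (deriv V) y - r * y * deriv V y - lam * V y = 0) ∧
    V b = (b - L) * b^α ∧
    deriv V 1 = 0 := by
  have hσ2 : (0:ℝ) < σ^2 := by positivity
  have hb0 : (0:ℝ) < b := lt_trans one_pos hb
  set s := Real.sqrt ((r + σ^2/2)^2 + 2*lam*σ^2) with hs
  have hs2 : s^2 = (r + σ^2/2)^2 + 2*lam*σ^2 := Real.sq_sqrt (by positivity)
  have hsnn : 0 ≤ s := Real.sqrt_nonneg _
  have hsgt : r + σ^2/2 < s := by nlinarith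
  have hp1pos : 0 < p₁ := by
    rw [hp₁]; positivity
  have hp2neg : p₂ < 0 := by
    rw [hp₂]
    apply div_neg_of_neg_of_pos _ hσ2
    linarith
  -- the quadratic relations
  have hq1 : σ^2/2 * p₁^2 - (r + σ^2/2) * p₁ - lam = 0 := by
    have h : p₁ * σ^2 = (r + σ^2/2) + s := by
      rw [hp₁]; field_simp
    nlinarith [hs2, h]
  have hq2 : σ^2/2 * p₂^2 - (r + σ^2/2) * p₂ - lam = 0 := by
    have h : p₂ * σ^2 = (r + σ^2/2) - s := by
      rw [hp₂]; field_simp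
    nlinarith [hs2, h]
  -- denominator positive
  have hden : 0 < p₁ * b^p₂ - p₂ * b^p₁ := by
    have h1 : 0 < p₁ * b^p₂ := mul_pos hp1pos (Real.rpow_pos_of_pos hb0 _)
    have h2 : p₂ * b^p₁ < 0 :=
      mul_neg_of_neg_of_pos hp2neg (Real.rpow_pos_of_pos hb0 _)
    linarith
  -- first derivative
  have hVfun : V = fun y : ℝ => C * (p₁ * y^p₂ - p₂ * y^p₁) := funext hV
  have hderiv : ∀ y : ℝ, 0 < y →
      HasDerivAt V (C * (p₁ * (p₂ * y^(p₂-1)) - p₂ * (p₁ * y^(p₁-1)))) y := by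
    intro y hy
    have h2 : HasDerivAt (fun x : ℝ => x ^ p₂) (p₂ * y^(p₂-1)) y :=
      Real.hasDerivAt_rpow_const (Or.inl hy.ne')
    have h1 : HasDerivAt (fun x : ℝ => x ^ p₁) (p₁ * y^(p₁-1)) y :=
      Real.hasDerivAt_rpow_const (Or.inl hy.ne')
    rw [hVfun]
    exact ((h2.const_mul p₁).sub (h1.const_mul p₂)).const_mul C
  have hdV : ∀ y : ℝ, 0 < y →
      deriv V y = C * (p₁ * (p₂ * y^(p₂-1)) - p₂ * (p₁ * y^(p₁-1))) :=
    fun y hy => (hderiv y hy).deriv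
  refine ⟨hden, ?_, ?_, ?_⟩
  · -- ODE
    intro y hy
    obtain ⟨hy1, hyb⟩ := hy
    have hy0 : (0:ℝ) < y := lt_trans one_pos hy1
    set D : ℝ → ℝ := fun y => C * (p₁ * (p₂ * y^(p₂-1)) - p₂ * (p₁ * y^(p₁-1))) with hD
    have hEq : deriv V =ᶠ[nhds y] D :=
      Filter.eventuallyEq_of_mem (isOpen_Ioi.mem_nhds (show y ∈ Set.Ioi (0:ℝ) from hy0))
        (fun x hx => hdV x hx)
    have hD' : HasDerivAt D
        (C * (p₁ * (p₂ * ((p₂-1) * y^(p₂-1-1))) - p₂ * (p₁ * ((p₁-1) * y^(p₁-1-1))))) y := by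
      have h2 : HasDerivAt (fun x : ℝ => x ^ (p₂-1)) ((p₂-1) * y^(p₂-1-1)) y :=
        Real.hasDerivAt_rpow_const (Or.inl hy0.ne')
      have h1 : HasDerivAt (fun x : ℝ => x ^ (p₁-1)) ((p₁-1) * y^(p₁-1-1)) y :=
        Real.hasDerivAt_rpow_const (Or.inl hy0.ne')
      exact (((h2.const_mul p₂).const_mul p₁).sub
        ((h1.const_mul p₁).const_mul p₂)).const_mul C
    have hVy := hV y
    have hdVy := hdV y hy0
    have hddVy : deriv (deriv V) y
        = C * (p₁ * (p₂ * ((p₂-1) * y^(p₂-1-1))) - p₂ * (p₁ * ((p₁-1) * y^(p₁-1-1)))) := by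
      rw [hEq.deriv_eq]; exact hD'.deriv
    -- power identities
    have h2R : y ^ (2:ℝ) = y ^ (2:ℕ) := by
      rw [show (2:ℝ) = ((2:ℕ):ℝ) by norm_num, Real.rpow_natCast]
    have pow_id : ∀ p : ℝ, y ^ p = y ^ (p-2) * y^2 := by
      intro p
      have h := Real.rpow_add hy0 (p-2) 2
      rw [show p-2+2 = p by ring] at h
      rw [h, h2R]
    have pow_id1 : ∀ p : ℝ, y ^ (p-1) = y ^ (p-2) * y := by
      intro p
      have h := Real.rpow_add hy0 (p-2) 1
      rw [show p-2+1 = p-1 by ring] at h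
      rw [h, Real.rpow_one]
    rw [hddVy, hdVy, hVy, pow_id p₁, pow_id p₂, pow_id1 p₁, pow_id1 p₂,
      show p₂-1-1 = p₂-2 by ring, show p₁-1-1 = p₁-2 by ring]
    linear_combination (C * p₁ * y^(p₂-2) * y^2) * hq2 - (C * p₂ * y^(p₁-2) * y^2) * hq1
  · -- value matching
    rw [hV b, hC, div_mul_cancel₀ _ hden.ne']
    have : b ^ (α+1) = b ^ α * b := Real.rpow_add_one hb0.ne' α
    rw [this]; ring
  · -- normal reflection
    rw [hdV 1 one_pos, Real.one_rpow, Real.one_rpow]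
    ring
end

section
/- If r < σ²/2 (so that α < 0) and L > 0, then the function g is strictly decreasing on the interval (max{1, L}, ∞); in fact g'(y) = (2λ/(σ² y²))(L − y)((p₁ − 1)y^{p₁} + (1 − p₂)y^{p₂}) + (α/y²)((2λ/σ²)(y − L)(y^{p₁} − y^{p₂}) + L(p₁ y^{p₂} − p₂ y^{p₁})) < 0 for every y > max{1, L}. -/
/-!
The quadratic is `-λ < 0` at `0` and `-(r + λ) < 0` at `1`, so `p₂ < 0` and `p₁ > 1`.
Only the Vieta relation `p₁ p₂ σ² = -2λ` is needed to bring `g'` into the stated form.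
For `y > max 1 L` both summands are then negative: the first because `L - y < 0` while
`p₁ > 1 > p₂` makes the last factor positive; the second because `α < 0` while
`y^p₁ > y^p₂ > 0` (as `y > 1`), `y > L` and `p₁ > 0 > p₂` make its bracket positive.
-/

open Real

section QuadraticRoots

/-! The roots `(b ± √(b² + 2cs)) / s` of `(s/2) p² - b p - c`. -/

variable {s b c : ℝ}

theorem quadRoots_mul_mul (hs : s ≠ 0) (hd : 0 ≤ b ^ 2 + 2 * c * s) :
    (b + √(b ^ 2 + 2 * c * s)) / s * ((b - √(b ^ 2 + 2 * c * s)) / s) * s = -(2 * c) := by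
  have hsq := sq_sqrt hd
  field_simp
  linear_combination -hsq

theorem quadRoot_minus_neg (hs : 0 < s) (hc : 0 < c) : (b - √(b ^ 2 + 2 * c * s)) / s < 0 := by
  have : |b| < √(b ^ 2 + 2 * c * s) := by
    rw [← sqrt_sq_eq_abs]
    exact sqrt_lt_sqrt (sq_nonneg b) (by nlinarith)
  exact div_neg_of_neg_of_pos (by linarith [le_abs_self b]) hs

/-- The quadratic is negative at `1` exactly when `s < 2 (b + c)`. -/
theorem one_lt_quadRoot_plus (hs : 0 < s) (h : s < 2 * (b + c)) :
    1 < (b + √(b ^ 2 + 2 * c * s)) / s := by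
  rw [one_lt_div hs, ← sub_lt_iff_lt_add']
  rcases lt_or_ge (s - b) 0 with hneg | hnn
  · exact hneg.trans_le (sqrt_nonneg _)
  · exact lt_sqrt_of_sq_lt (by nlinarith)

end QuadraticRoots

section Derivative

variable (α p₁ p₂ L : ℝ)

noncomputable def gFun (y : ℝ) : ℝ :=
  (α + 1) * (p₁ * y ^ p₂ - p₂ * y ^ p₁) - α * L * (p₁ * y ^ (p₂ - 1) - p₂ * y ^ (p₁ - 1))
    - p₁ * p₂ * (y - L) * (y ^ (p₂ - 1) - y ^ (p₁ - 1))

noncomputable def gDeriv (lam σ y : ℝ) : ℝ :=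
  (2 * lam / (σ ^ 2 * y ^ 2)) * (L - y) * ((p₁ - 1) * y ^ p₁ + (1 - p₂) * y ^ p₂)
    + (α / y ^ 2) * ((2 * lam / σ ^ 2) * (y - L) * (y ^ p₁ - y ^ p₂)
      + L * (p₁ * y ^ p₂ - p₂ * y ^ p₁))

variable {α p₁ p₂ L}

theorem hasDerivAt_gFun {lam σ y : ℝ} (hσ : σ ≠ 0) (hprod : p₁ * p₂ * σ ^ 2 = -(2 * lam))
    (hy : 0 < y) : HasDerivAt (gFun α p₁ p₂ L) (gDeriv α p₁ p₂ L lam σ y) y := by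
  have hpow (p : ℝ) : HasDerivAt (fun x : ℝ => x ^ p) (p * y ^ (p - 1)) y :=
    hasDerivAt_rpow_const (Or.inl hy.ne')
  have H : HasDerivAt (gFun α p₁ p₂ L) _ y :=
    ((((hpow p₂).const_mul p₁).sub ((hpow p₁).const_mul p₂)).const_mul (α + 1)).sub
      ((((hpow (p₂ - 1)).const_mul p₁).sub ((hpow (p₁ - 1)).const_mul p₂)).const_mul (α * L))
      |>.sub ((((hasDerivAt_id y).sub_const L).const_mul (p₁ * p₂)).mul
        ((hpow (p₂ - 1)).sub (hpow (p₁ - 1))))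
  refine H.congr_deriv ?_
  have hlam : lam = -(p₁ * p₂ * σ ^ 2) / 2 := by linarith
  simp only [gDeriv, id, rpow_sub_one hy.ne', hlam]
  field_simp
  ring

theorem gDeriv_neg {lam σ y : ℝ} (hσ : σ ≠ 0) (hlam : 0 < lam) (hα : α < 0) (hL : 0 < L)
    (hp₁ : 1 < p₁) (hp₂ : p₂ < 0) (hy : max 1 L < y) : gDeriv α p₁ p₂ L lam σ y < 0 := by
  obtain ⟨hy1, hyL⟩ := max_lt_iff.mp hy
  have hy0 : 0 < y := one_pos.trans hy1
  have hA : 0 < y ^ p₁ := rpow_pos_of_pos hy0 _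
  have hB : 0 < y ^ p₂ := rpow_pos_of_pos hy0 _
  have hBA : y ^ p₂ < y ^ p₁ := rpow_lt_rpow_of_exponent_lt hy1 (by linarith)
  have first : (2 * lam / (σ ^ 2 * y ^ 2)) * (L - y) * ((p₁ - 1) * y ^ p₁ + (1 - p₂) * y ^ p₂)
      < 0 := by
    refine mul_neg_of_neg_of_pos (mul_neg_of_pos_of_neg (by positivity) (by linarith)) ?_
    nlinarith
  have second : (α / y ^ 2) * ((2 * lam / σ ^ 2) * (y - L) * (y ^ p₁ - y ^ p₂)
      + L * (p₁ * y ^ p₂ - p₂ * y ^ p₁)) < 0 := by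
    refine mul_neg_of_neg_of_pos (div_neg_of_neg_of_pos hα (by positivity)) ?_
    have h1 : 0 < (2 * lam / σ ^ 2) * (y - L) * (y ^ p₁ - y ^ p₂) :=
      mul_pos (mul_pos (by positivity) (by linarith)) (by linarith)
    have h2 : 0 < p₁ * y ^ p₂ - p₂ * y ^ p₁ := by nlinarith
    nlinarith
  exact add_neg first second

end Derivative

/-- If `r < σ²/2` (so `α < 0`) and `L > 0`, then `g` is strictly
decreasing on `(max 1 L, ∞)`; in fact
`g'(y) = (2λ/(σ²y²))(L − y)((p₁ − 1)y^(p₁) + (1 − p₂)y^(p₂))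
        + (α/y²)((2λ/σ²)(y − L)(y^(p₁) − y^(p₂)) + L(p₁ y^(p₂) − p₂ y^(p₁))) < 0`
for every `y > max 1 L`. -/
theorem stmt_6 (r σ lam α p₁ p₂ L : ℝ) (g : ℝ → ℝ)
    (hr : 0 < r) (hσ : 0 < σ) (hlam : 0 < lam)
    (hα : α = 2*r/σ^2 - 1)
    (hp₁ : p₁ = ((r + σ^2/2) + Real.sqrt ((r + σ^2/2)^2 + 2*lam*σ^2)) / σ^2)
    (hp₂ : p₂ = ((r + σ^2/2) - Real.sqrt ((r + σ^2/2)^2 + 2*lam*σ^2)) / σ^2)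
    (hdrift : r < σ^2/2) (hL : 0 < L)
    (hg : ∀ y : ℝ, g y = (α+1) * (p₁ * y^p₂ - p₂ * y^p₁)
      - α * L * (p₁ * y^(p₂-1) - p₂ * y^(p₁-1))
      - p₁ * p₂ * (y - L) * (y^(p₂-1) - y^(p₁-1))) :
    StrictAntiOn g (Set.Ioi (max 1 L)) ∧
    ∀ y : ℝ, max 1 L < y →
      deriv g y = (2*lam/(σ^2 * y^2)) * (L - y) * ((p₁ - 1) * y^p₁ + (1 - p₂) * y^p₂)
          + (α/y^2) * ((2*lam/σ^2) * (y - L) * (y^p₁ - y^p₂) + L * (p₁ * y^p₂ - p₂ * y^p₁)) ∧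
      (2*lam/(σ^2 * y^2)) * (L - y) * ((p₁ - 1) * y^p₁ + (1 - p₂) * y^p₂)
          + (α/y^2) * ((2*lam/σ^2) * (y - L) * (y^p₁ - y^p₂) + L * (p₁ * y^p₂ - p₂ * y^p₁)) < 0 := by
  have hσ2 : 0 < σ ^ 2 := by positivity
  have hprod : p₁ * p₂ * σ ^ 2 = -(2 * lam) :=
    hp₁ ▸ hp₂ ▸ quadRoots_mul_mul hσ2.ne' (by positivity)
  have hp₁_gt : 1 < p₁ := hp₁ ▸ one_lt_quadRoot_plus hσ2 (by linarith)
  have hp₂_neg : p₂ < 0 := hp₂ ▸ quadRoot_minus_neg hσ2 hlam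
  have hα_neg : α < 0 := by
    rw [hα, sub_neg, div_lt_one hσ2]; linarith
  have hg_eq : g = gFun α p₁ p₂ L := funext hg
  subst hg_eq
  have hderiv {y : ℝ} (hy : max 1 L < y) :
      HasDerivAt (gFun α p₁ p₂ L) (gDeriv α p₁ p₂ L lam σ y) y :=
    hasDerivAt_gFun hσ.ne' hprod (zero_lt_one.trans ((le_max_left 1 L).trans_lt hy))
  have hneg {y : ℝ} (hy : max 1 L < y) : gDeriv α p₁ p₂ L lam σ y < 0 :=
    gDeriv_neg hσ.ne' hlam hα_neg hL hp₁_gt hp₂_neg hy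
  refine ⟨strictAntiOn_of_deriv_neg (convex_Ioi _)
    (fun y hy => (hderiv hy).continuousAt.continuousWithinAt) fun y hy => ?_,
    fun y hy => ⟨(hderiv hy).deriv, hneg hy⟩⟩
  rw [interior_Ioi] at hy
  exact (hderiv hy).deriv ▸ hneg hy
end

section
/- If r < σ²/2 and L > 0, then g(y) → −∞ as y → ∞. -/
/-- If `r < σ²/2` and `L > 0`, then `g(y) → −∞` as `y → ∞`. -/
theorem stmt_8 (r σ lam α p₁ p₂ L : ℝ) (g : ℝ → ℝ)
    (hr : 0 < r) (hσ : 0 < σ) (hlam : 0 < lam)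
    (hα : α = 2*r/σ^2 - 1)
    (hp₁ : p₁ = ((r + σ^2/2) + Real.sqrt ((r + σ^2/2)^2 + 2*lam*σ^2)) / σ^2)
    (hp₂ : p₂ = ((r + σ^2/2) - Real.sqrt ((r + σ^2/2)^2 + 2*lam*σ^2)) / σ^2)
    (hdrift : r < σ^2/2) (hL : 0 < L)
    (hg : ∀ y : ℝ, g y = (α+1) * (p₁ * y^p₂ - p₂ * y^p₁)
      - α * L * (p₁ * y^(p₂-1) - p₂ * y^(p₁-1))
      - p₁ * p₂ * (y - L) * (y^(p₂-1) - y^(p₁-1))) :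
    Filter.Tendsto g Filter.atTop Filter.atBot := by
  have hσ2 : (0:ℝ) < σ^2 := by positivity
  obtain ⟨s, hs⟩ : ∃ s : ℝ, s = Real.sqrt ((r + σ^2/2)^2 + 2*lam*σ^2) := ⟨_, rfl⟩
  obtain ⟨a, ha⟩ : ∃ a : ℝ, a = r + σ^2/2 := ⟨_, rfl⟩
  rw [← hs] at hp₁ hp₂
  rw [← ha] at hp₁ hp₂
  have ha0 : 0 < a := by rw [ha]; positivity
  have hsa : a < s := by
    rw [hs, ha]
    exact (Real.lt_sqrt (by positivity)).2 (by nlinarith)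
  -- coefficients
  obtain ⟨A, hA⟩ : ∃ A : ℝ, A = p₁ * (α + 1 - p₂) := ⟨_, rfl⟩
  obtain ⟨B, hB⟩ : ∃ B : ℝ, B = p₂ * (p₁ - α - 1) := ⟨_, rfl⟩
  obtain ⟨C, hC⟩ : ∃ C : ℝ, C = L * p₁ * (p₂ - α) := ⟨_, rfl⟩
  obtain ⟨D, hD⟩ : ∃ D : ℝ, D = L * p₂ * (α - p₁) := ⟨_, rfl⟩
  -- sign facts
  have hp2neg : p₂ < 0 := by
    rw [hp₂]
    apply div_neg_of_neg_of_pos _ hσ2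
    linarith
  have hp1m1 : 0 < p₁ - 1 := by
    rw [hp₁]
    have : (a + s) / σ^2 - 1 = (a + s - σ^2)/σ^2 := by field_simp
    rw [this]
    apply div_pos _ hσ2
    linarith [hsa, hr, ha, hdrift]
  have hBneg : B < 0 := by
    rw [hB]
    apply mul_neg_of_neg_of_pos hp2neg
    rw [hp₁, hα, ha]
    have : ((r + σ^2/2) + s) / σ^2 - (2*r/σ^2 - 1) - 1 = (σ^2/2 - r + s) / σ^2 := by
      field_simp; ring
    rw [this]
    apply div_pos _ hσ2
    linarith
  have h21 : p₂ - p₁ + 1 < 0 := by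
    rw [hp₁, hp₂]
    have : (a - s)/σ^2 - (a + s)/σ^2 + 1 = (σ^2 - 2*s)/σ^2 := by field_simp; ring
    rw [this]
    apply div_neg_of_neg_of_pos _ hσ2
    linarith [hsa, hr, ha, hdrift]
  have h20 : p₂ - p₁ < 0 := by
    rw [hp₁, hp₂]
    have : (a - s)/σ^2 - (a + s)/σ^2 = (-(2*s))/σ^2 := by field_simp; ring
    rw [this]
    apply div_neg_of_neg_of_pos _ hσ2
    nlinarith
  -- key identity
  have key : ∀ y : ℝ, 1 ≤ y →
      g y = y^(p₁-1) * (B*y + A*y^(p₂-p₁+1) + C*y^(p₂-p₁) + D) := by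
    intro y hy1
    have hy : (0:ℝ) < y := lt_of_lt_of_le one_pos hy1
    have e4 : y * y^(p₂-1) = y^p₂ := by
      nth_rewrite 1 [← Real.rpow_one y]
      rw [← Real.rpow_add hy]; ring_nf
    have e5 : y * y^(p₁-1) = y^p₁ := by
      nth_rewrite 1 [← Real.rpow_one y]
      rw [← Real.rpow_add hy]; ring_nf
    have e1 : y^(p₁-1) * y = y^p₁ := by rw [mul_comm]; exact e5
    have e2 : y^(p₁-1) * y^(p₂-p₁+1) = y^p₂ := by
      rw [← Real.rpow_add hy]; ring_nf
    have e3 : y^(p₁-1) * y^(p₂-p₁) = y^(p₂-1) := by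
      rw [← Real.rpow_add hy]; ring_nf
    have hgy : g y = A*y^p₂ + B*y^p₁ + C*y^(p₂-1) + D*y^(p₁-1) := by
      rw [hg, hA, hB, hC, hD]
      linear_combination (-(p₁*p₂)) * e4 + (p₁*p₂) * e5
    rw [hgy]
    linear_combination (-B) * e1 + (-A) * e2 + (-C) * e3
  -- limits
  have hF : Filter.Tendsto (fun y : ℝ => y^(p₁-1)) Filter.atTop Filter.atTop :=
    tendsto_rpow_atTop hp1m1
  have hlin : Filter.Tendsto (fun y : ℝ => B * y) Filter.atTop Filter.atBot :=
    (Filter.tendsto_const_mul_atBot_of_neg hBneg).2 Filter.tendsto_id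
  have hz1 : Filter.Tendsto (fun y : ℝ => y^(p₂-p₁+1)) Filter.atTop (nhds 0) := by
    have := tendsto_rpow_neg_atTop (y := -(p₂-p₁+1)) (by linarith)
    simpa using this
  have hz2 : Filter.Tendsto (fun y : ℝ => y^(p₂-p₁)) Filter.atTop (nhds 0) := by
    have := tendsto_rpow_neg_atTop (y := -(p₂-p₁)) (by linarith)
    simpa using this
  have hrest : Filter.Tendsto (fun y : ℝ => A*y^(p₂-p₁+1) + C*y^(p₂-p₁) + D)
      Filter.atTop (nhds (A*0 + C*0 + D)) := by
    exact (((hz1.const_mul A).add (hz2.const_mul C)).add tendsto_const_nhds)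
  have hG : Filter.Tendsto (fun y : ℝ => B*y + A*y^(p₂-p₁+1) + C*y^(p₂-p₁) + D)
      Filter.atTop Filter.atBot := by
    have := hrest.add_atBot hlin
    refine this.congr (fun y => by ring)
  have hprod : Filter.Tendsto
      (fun y : ℝ => y^(p₁-1) * (B*y + A*y^(p₂-p₁+1) + C*y^(p₂-p₁) + D))
      Filter.atTop Filter.atBot := hF.atTop_mul_atBot₀ hG
  refine hprod.congr' ?_
  filter_upwards [Filter.eventually_ge_atTop 1] with y hy
  exact (key y hy).symm
end

section
/- If r < σ²/2 and L > 0, then the transcendental equation (α+1)(p₁ b^{p₂} − p₂ b^{p₁}) − αL(p₁ b^{p₂−1} − p₂ b^{p₁−1}) − p₁ p₂ (b − L)(b^{p₂−1} − b^{p₁−1}) = 0 has exactly one solution b in the interval (max{1, L}, ∞); i.e., there exists a unique b > max{1, L} with g(b) = 0. -/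
open Filter Set

set_option maxHeartbeats 1000000

/-- If `r < σ²/2` and `L > 0`, then the transcendental equation
`g(b) = 0` has exactly one solution `b` in `(max 1 L, ∞)`. -/
theorem stmt_9 (r σ lam α p₁ p₂ L : ℝ) (g : ℝ → ℝ)
    (hr : 0 < r) (hσ : 0 < σ) (hlam : 0 < lam)
    (hα : α = 2*r/σ^2 - 1)
    (hp₁ : p₁ = ((r + σ^2/2) + Real.sqrt ((r + σ^2/2)^2 + 2*lam*σ^2)) / σ^2)
    (hp₂ : p₂ = ((r + σ^2/2) - Real.sqrt ((r + σ^2/2)^2 + 2*lam*σ^2)) / σ^2)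
    (hdrift : r < σ^2/2) (hL : 0 < L)
    (hg : ∀ y : ℝ, g y = (α+1) * (p₁ * y^p₂ - p₂ * y^p₁)
      - α * L * (p₁ * y^(p₂-1) - p₂ * y^(p₁-1))
      - p₁ * p₂ * (y - L) * (y^(p₂-1) - y^(p₁-1))) :
    ∃! b : ℝ, max 1 L < b ∧ g b = 0 := by
  have hσ2 : (0:ℝ) < σ^2 := by positivity
  set D := Real.sqrt ((r + σ^2/2)^2 + 2*lam*σ^2) with hDdef
  have hDsq : D^2 = (r + σ^2/2)^2 + 2*lam*σ^2 := Real.sq_sqrt (by positivity)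
  have hD0 : 0 ≤ D := Real.sqrt_nonneg _
  have hDgt : r + σ^2/2 < D := by nlinarith [mul_pos hlam hσ2]
  have hαval : α * σ^2 = 2*r - σ^2 := by rw [hα]; field_simp
  have hp₁σ : p₁ * σ^2 = (r + σ^2/2) + D := by rw [hp₁]; field_simp
  have hp₂σ : p₂ * σ^2 = (r + σ^2/2) - D := by rw [hp₂]; field_simp
  have hαneg : α < 0 := by nlinarith
  have hα1 : 0 < α + 1 := by nlinarith
  have hsum : p₁ + p₂ = α + 2 := by
    have h : (p₁ + p₂) * σ^2 = (α + 2) * σ^2 := by nlinarith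
    exact mul_right_cancel₀ (ne_of_gt hσ2) h
  have hp1gt : α + 2 < p₁ := by
    have h : (α + 2) * σ^2 < p₁ * σ^2 := by nlinarith
    exact lt_of_mul_lt_mul_right h hσ2.le
  have hdiff : 1 < p₁ - p₂ := by
    have h : 1 * σ^2 < (p₁ - p₂) * σ^2 := by nlinarith
    exact lt_of_mul_lt_mul_right h hσ2.le
  have hp2neg : p₂ < 0 := by linarith
  have hp11 : 1 < p₁ := by linarith
  have hp1pos : 0 < p₁ := by linarith
  have hA : 0 < p₁ - α - 1 := by linarith
  have hB : 0 < α + 1 - p₂ := by linarith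
  set M := max 1 L with hMdef
  have hM1 : (1:ℝ) ≤ M := le_max_left _ _
  have hML : L ≤ M := le_max_right _ _
  have hM0 : (0:ℝ) < M := lt_of_lt_of_le one_pos hM1
  set k : ℝ → ℝ := fun y => p₂*(p₁-α-1)*y - p₂*L*(p₁-α)
      + p₁*(α+1-p₂) * y^(p₂-p₁+1) - p₁*(α-p₂)*L * y^(p₂-p₁) with hk
  -- factorization g y = y^(p₁-1) * k y
  have hgk : ∀ y : ℝ, 0 < y → g y = y^(p₁-1) * k y := by
    intro y hy
    have hy0 : y ≠ 0 := ne_of_gt hy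
    have e1 : y^p₁ = y^(p₁-1) * y := by
      rw [← Real.rpow_add_one hy0]; congr 1; ring
    have e3 : y^p₂ = y^(p₁-1) * y^(p₂-p₁+1) := by
      rw [← Real.rpow_add hy]; congr 1; ring
    have e4 : y^(p₂-1) = y^(p₁-1) * y^(p₂-p₁) := by
      rw [← Real.rpow_add hy]; congr 1; ring
    have e5 : y^(p₂-p₁+1) = y^(p₂-p₁) * y := by
      rw [← Real.rpow_add_one hy0]
    rw [hg, e1, e3, e4]; simp only [hk]; rw [e5]; ring
  -- derivative of k
  have hd : ∀ y : ℝ, 0 < y → HasDerivAt k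
      (p₂*(p₁-α-1)*1 + p₁*(α+1-p₂)*((p₂-p₁+1) * y^(p₂-p₁+1-1))
        - p₁*(α-p₂)*L*((p₂-p₁) * y^(p₂-p₁-1))) y := by
    intro y hy
    rw [hk]
    exact ((((hasDerivAt_id y).const_mul (p₂*(p₁-α-1))).sub_const
      (p₂*L*(p₁-α))).add ((Real.hasDerivAt_rpow_const (Or.inl hy.ne')).const_mul
      (p₁*(α+1-p₂)))).sub ((Real.hasDerivAt_rpow_const (Or.inl hy.ne')).const_mul
      (p₁*(α-p₂)*L))
  -- k strictly decreasing on [M, ∞)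
  have hanti : StrictAntiOn k (Set.Ici M) := by
    apply strictAntiOn_of_deriv_neg (convex_Ici M)
    · intro x hx
      exact ((hd x (lt_of_lt_of_le hM0 hx)).continuousAt).continuousWithinAt
    · intro x hx
      rw [interior_Ici] at hx
      have hxM : M < x := hx
      have hx0 : 0 < x := lt_trans hM0 hxM
      rw [(hd x hx0).deriv]
      have e : p₂-p₁+1-1 = p₂-p₁ := by ring
      rw [e]
      have hv : x^(p₂-p₁) = x^(p₂-p₁-1)*x := by
        rw [← Real.rpow_add_one hx0.ne']; congr 1; ring
      rw [hv]
      have hwpos : 0 < x^(p₂-p₁-1) := Real.rpow_pos_of_pos hx0 _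
      set w := x^(p₂-p₁-1) with hw
      have hCx : (α+1-p₂)*(p₂-p₁+1)*x - (α-p₂)*(p₂-p₁)*L ≤ 0 := by
        rcases le_or_gt (α - p₂) 0 with h|h
        · have h1 : 0 < (α+1-p₂)*((p₁-p₂-1)*x) :=
            mul_pos hB (mul_pos (by linarith) hx0)
          have h2 : 0 ≤ (-(α-p₂))*((p₁-p₂)*L) :=
            mul_nonneg (neg_nonneg.2 h) (mul_nonneg (by linarith) hL.le)
          nlinarith
        · have hxL : L < x := lt_of_le_of_lt hML hxM
          have h1 : (α-p₂)*(p₁-p₂)*L ≤ (α-p₂)*(p₁-p₂)*x :=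
            mul_le_mul_of_nonneg_left hxL.le (mul_pos h (by linarith : (0:ℝ) < p₁-p₂)).le
          have h2 : x*(α+1-p₁) < 0 := mul_neg_of_pos_of_neg hx0 (by linarith)
          nlinarith
      have hneg : p₂*(p₁-α-1) < 0 := mul_neg_of_neg_of_pos hp2neg hA
      have hterm : (p₁*w) * ((α+1-p₂)*(p₂-p₁+1)*x - (α-p₂)*(p₂-p₁)*L) ≤ 0 :=
        mul_nonpos_of_nonneg_of_nonpos (mul_pos hp1pos hwpos).le hCx
      nlinarith [hterm, hneg]
  -- g M > 0
  have hgM : 0 < g M := by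
    rcases le_total L 1 with hcase|hcase
    · have hM : M = 1 := max_eq_left hcase
      rw [hM, hg]
      simp only [Real.one_rpow]
      have h1 : 0 < α + 1 - α*L := by nlinarith [mul_pos (neg_pos.2 hαneg) hL]
      nlinarith [mul_pos h1 (show (0:ℝ) < p₁ - p₂ by linarith)]
    · have hM : M = L := max_eq_right hcase
      rw [hM, hg]
      have hL0 : L ≠ 0 := hL.ne'
      have f1 : L^p₂ = L^(p₂-1)*L := by
        rw [← Real.rpow_add_one hL0]; congr 1; ring
      have f2 : L^p₁ = L^(p₁-1)*L := by
        rw [← Real.rpow_add_one hL0]; congr 1; ring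
      rw [f1, f2]
      have A1 : 0 < L^(p₂-1) := Real.rpow_pos_of_pos hL _
      have A2 : 0 < L^(p₁-1) := Real.rpow_pos_of_pos hL _
      nlinarith [mul_pos (mul_pos hp1pos A1) hL,
        mul_pos (mul_pos (neg_pos.2 hp2neg) A2) hL]
  have hkM : 0 < k M := by
    have hgkM := hgk M hM0
    have hp : 0 < M^(p₁-1) := Real.rpow_pos_of_pos hM0 _
    by_contra h
    push_neg at h
    nlinarith [mul_nonpos_of_nonneg_of_nonpos hp.le h]
  -- k tends to -∞
  have ht : Tendsto k atTop atBot := by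
    have hc : p₂*(p₁-α-1) < 0 := mul_neg_of_neg_of_pos hp2neg hA
    have h1 : Tendsto (fun y:ℝ => p₂*(p₁-α-1)*y) atTop atBot :=
      (tendsto_const_mul_atBot_of_neg hc).2 tendsto_id
    have h2 : Tendsto (fun y:ℝ => y^(p₂-p₁+1)) atTop (nhds 0) := by
      have := tendsto_rpow_neg_atTop (show 0 < -(p₂-p₁+1) by linarith)
      simpa using this
    have h3 : Tendsto (fun y:ℝ => y^(p₂-p₁)) atTop (nhds 0) := by
      have := tendsto_rpow_neg_atTop (show 0 < -(p₂-p₁) by linarith)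
      simpa using this
    have hrest : Tendsto (fun y:ℝ => -(p₂*L*(p₁-α)) + p₁*(α+1-p₂) * y^(p₂-p₁+1)
        - p₁*(α-p₂)*L * y^(p₂-p₁)) atTop
        (nhds (-(p₂*L*(p₁-α)) + p₁*(α+1-p₂) * 0 - p₁*(α-p₂)*L * 0)) :=
      (tendsto_const_nhds.add (h2.const_mul _)).sub (h3.const_mul _)
    have := h1.atBot_add hrest
    apply this.congr
    intro y
    simp only [hk]; ring
  obtain ⟨y₀, hy₀M, hy₀k⟩ : ∃ y₀, M < y₀ ∧ k y₀ < 0 := by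
    have h1 := ht.eventually (eventually_lt_atBot (0:ℝ))
    have h2 := eventually_gt_atTop M
    obtain ⟨y₀, hA', hB'⟩ := (h2.and h1).exists
    exact ⟨y₀, hA', hB'⟩
  have hcont : ContinuousOn k (Set.Icc M y₀) := fun x hx =>
    ((hd x (lt_of_lt_of_le hM0 hx.1)).continuousAt).continuousWithinAt
  have h0mem : (0:ℝ) ∈ Set.Icc (k y₀) (k M) := ⟨hy₀k.le, hkM.le⟩
  obtain ⟨b, hbmem, hbk⟩ := intermediate_value_Icc' (le_of_lt hy₀M) hcont h0mem
  have hbM : M < b := by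
    rcases eq_or_lt_of_le hbmem.1 with h|h
    · exfalso; rw [← h] at hbk; rw [hbk] at hkM; exact lt_irrefl 0 hkM
    · exact h
  have hb0 : 0 < b := lt_of_lt_of_le hM0 hbmem.1
  refine ⟨b, ⟨hbM, ?_⟩, ?_⟩
  · rw [hgk b hb0, hbk, mul_zero]
  · rintro b' ⟨hb'M, hb'g⟩
    have hb'0 : 0 < b' := lt_trans hM0 hb'M
    have hkb' : k b' = 0 := by
      have hh := hgk b' hb'0
      rw [hb'g] at hh
      exact (mul_eq_zero.1 hh.symm).resolve_left (Real.rpow_pos_of_pos hb'0 _).ne'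
    exact hanti.injOn (Set.mem_Ici.2 hb'M.le) (Set.mem_Ici.2 hbmem.1)
      (by rw [hkb', hbk])
end

section
/- Suppose r < σ²/2, L > 0 and b > L with b > 1. Then for every y ∈ [1, b], (b^α (b − L) p₁ p₂ / (p₁ b^{p₂} − p₂ b^{p₁}))·((p₂ − 1) y^{p₂ − 2} − (p₁ − 1) y^{p₁ − 2}) − (y^{α − 2}/σ⁴)·((2r − σ²)(2ry + L(2σ² − 2r))) > 0; in particular the difference h(y) = V̂(y) − (y − L)y^α between the candidate value function V̂(y) = ((b^{α+1} − Lb^α)/(p₁ b^{p₂} − p₂ b^{p₁}))(p₁ y^{p₂} − p₂ y^{p₁}) and the (extended) gain function is strictly convex on [1, b]. -/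
/-!
Both roots are real with `p₂ < 0 < 1 < p₁`, so the normalising constant
`K = b^α (b - L) / (p₁ b^p₂ - p₂ b^p₁)` is positive. On `(0, ∞)` the second derivative of
`h y = K (p₁ y^p₂ - p₂ y^p₁) - (y - L) y^α` is
`K p₁ p₂ ((p₂ - 1) y^(p₂-2) - (p₁ - 1) y^(p₁-2)) - α y^(α-2) ((α + 1) y - (α - 1) L)`.
The first summand is positive because `p₁ p₂ < 0` while the bracket is negative, and the second
because `r < σ²/2` forces `-1 < α < 0`, which makes `(α + 1) y - (α - 1) L` positive.
-/

open Topology Set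

section Roots

variable {r σ lam : ℝ}

lemma lower_root_neg (hσ : σ ≠ 0) (hlam : 0 < lam) :
    ((r + σ^2/2) - Real.sqrt ((r + σ^2/2)^2 + 2*lam*σ^2)) / σ^2 < 0 := by
  have hσ2 : 0 < σ^2 := by positivity
  refine div_neg_of_neg_of_pos (sub_neg.2 (Real.lt_sqrt_of_sq_lt ?_)) hσ2
  nlinarith

lemma one_lt_upper_root (hr : 0 < r) (hσ : σ ≠ 0) (hlam : 0 ≤ lam) :
    1 < ((r + σ^2/2) + Real.sqrt ((r + σ^2/2)^2 + 2*lam*σ^2)) / σ^2 := by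
  have hσ2 : 0 < σ^2 := by positivity
  have hsqrt : r + σ^2/2 ≤ Real.sqrt ((r + σ^2/2)^2 + 2*lam*σ^2) :=
    (le_abs_self _).trans (Real.abs_le_sqrt (by nlinarith))
  rw [one_lt_div hσ2]
  linarith

end Roots

/-- `V̂ y - (y - L) y^α`, with the constant of `V̂` written `K`. -/
noncomputable def valueGap (K p₁ p₂ α L y : ℝ) : ℝ :=
  K * (p₁ * y^p₂ - p₂ * y^p₁) - (y - L) * y^α

lemma deriv2_eq_of_hasDerivAt {f f' : ℝ → ℝ} {x f'' : ℝ}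
    (hf : ∀ᶠ y in 𝓝 x, HasDerivAt f (f' y) y) (hf' : HasDerivAt f' f'' x) :
    deriv^[2] f x = f'' := by
  change deriv (deriv f) x = f''
  have hderiv : deriv f =ᶠ[𝓝 x] f' := hf.mono fun y hy => hy.deriv
  rw [hderiv.deriv_eq, hf'.deriv]

namespace valueGap

variable {K p₁ p₂ α L x : ℝ}

lemma hasDerivAt (hx : 0 < x) :
    HasDerivAt (valueGap K p₁ p₂ α L)
      (K * p₁ * p₂ * (x^(p₂-1) - x^(p₁-1)) - (x^α + (x - L) * (α * x^(α-1)))) x := by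
  have e₂ := Real.hasDerivAt_rpow_const (x := x) (p := p₂) (Or.inl hx.ne')
  have e₁ := Real.hasDerivAt_rpow_const (x := x) (p := p₁) (Or.inl hx.ne')
  have eα := Real.hasDerivAt_rpow_const (x := x) (p := α) (Or.inl hx.ne')
  exact ((((e₂.const_mul p₁).sub (e₁.const_mul p₂)).const_mul K).sub
    (((hasDerivAt_id' x).sub_const L).mul eα)).congr_deriv (by ring)

lemma hasDerivAt_deriv (hx : 0 < x) :
    HasDerivAt (fun y => K * p₁ * p₂ * (y^(p₂-1) - y^(p₁-1)) - (y^α + (y - L) * (α * y^(α-1))))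
      (K * p₁ * p₂ * ((p₂ - 1) * x^(p₂-2) - (p₁ - 1) * x^(p₁-2))
        - α * x^(α-2) * ((α + 1) * x - (α - 1) * L)) x := by
  have e₂ := Real.hasDerivAt_rpow_const (x := x) (p := p₂ - 1) (Or.inl hx.ne')
  have e₁ := Real.hasDerivAt_rpow_const (x := x) (p := p₁ - 1) (Or.inl hx.ne')
  have eα := Real.hasDerivAt_rpow_const (x := x) (p := α) (Or.inl hx.ne')
  have eα₁ := Real.hasDerivAt_rpow_const (x := x) (p := α - 1) (Or.inl hx.ne')
  have hpow : x^(α-1) = x^(α-2) * x := by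
    rw [← Real.rpow_add_one hx.ne']
    ring_nf
  refine (((e₂.sub e₁).const_mul (K * p₁ * p₂)).sub
    (eα.add (((hasDerivAt_id' x).sub_const L).mul (eα₁.const_mul α)))).congr_deriv ?_
  simp only [show p₂ - 1 - 1 = p₂ - 2 by ring, show p₁ - 1 - 1 = p₁ - 2 by ring,
    show α - 1 - 1 = α - 2 by ring, hpow]
  ring

lemma deriv2 (hx : 0 < x) :
    deriv^[2] (valueGap K p₁ p₂ α L) x =
      K * p₁ * p₂ * ((p₂ - 1) * x^(p₂-2) - (p₁ - 1) * x^(p₁-2))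
        - α * x^(α-2) * ((α + 1) * x - (α - 1) * L) :=
  deriv2_eq_of_hasDerivAt ((eventually_gt_nhds hx).mono fun _ hy => hasDerivAt hy)
    (hasDerivAt_deriv hx)

variable (hK : 0 < K) (hp₂ : p₂ < 0) (hp₁ : 1 < p₁) (hα₀ : -1 < α) (hα : α < 0) (hL : 0 ≤ L)
include hK hp₂ hp₁ hα₀ hα hL

lemma deriv2_pos (hx : 0 < x) :
    0 < K * p₁ * p₂ * ((p₂ - 1) * x^(p₂-2) - (p₁ - 1) * x^(p₁-2))
        - α * x^(α-2) * ((α + 1) * x - (α - 1) * L) := by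
  have hKp : K * p₁ * p₂ < 0 := mul_neg_of_pos_of_neg (by positivity) hp₂
  have hbracket : (p₂ - 1) * x^(p₂-2) - (p₁ - 1) * x^(p₁-2) < 0 := by
    have h₂ : (p₂ - 1) * x^(p₂-2) < 0 :=
      mul_neg_of_neg_of_pos (by linarith) (Real.rpow_pos_of_pos hx _)
    have h₁ : 0 < (p₁ - 1) * x^(p₁-2) :=
      mul_pos (by linarith) (Real.rpow_pos_of_pos hx _)
    linarith
  have hgain : α * x^(α-2) * ((α + 1) * x - (α - 1) * L) < 0 :=
    mul_neg_of_neg_of_pos (mul_neg_of_neg_of_pos hα (Real.rpow_pos_of_pos hx _)) (by nlinarith)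
  nlinarith

lemma strictConvexOn {s : Set ℝ} (hs : Convex ℝ s) (hs₀ : s ⊆ Ioi 0) :
    StrictConvexOn ℝ s (valueGap K p₁ p₂ α L) := by
  refine strictConvexOn_of_deriv2_pos hs
    (fun x hx => (hasDerivAt (hs₀ hx)).continuousAt.continuousWithinAt) fun x hx => ?_
  have hx₀ : 0 < x := hs₀ (interior_subset hx)
  rw [deriv2 hx₀]
  exact deriv2_pos hK hp₂ hp₁ hα₀ hα hL hx₀

end valueGap

theorem stmt_10_general (r σ lam α p₁ p₂ b L : ℝ) (V h : ℝ → ℝ)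
    (hr : 0 < r) (hσ : 0 < σ) (hlam : 0 < lam)
    (hα : α = 2*r/σ^2 - 1)
    (hp₁ : p₁ = ((r + σ^2/2) + Real.sqrt ((r + σ^2/2)^2 + 2*lam*σ^2)) / σ^2)
    (hp₂ : p₂ = ((r + σ^2/2) - Real.sqrt ((r + σ^2/2)^2 + 2*lam*σ^2)) / σ^2)
    (hdrift : r < σ^2/2) (hL : 0 < L) (hbL : L < b)
    (hV : ∀ y : ℝ, V y = ((b^(α+1) - L * b^α) / (p₁ * b^p₂ - p₂ * b^p₁))
      * (p₁ * y^p₂ - p₂ * y^p₁))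
    (hh : ∀ y : ℝ, h y = V y - (y - L) * y^α) :
    (∀ y ∈ Set.Icc (1:ℝ) b,
      0 < (b^α * (b - L) * p₁ * p₂ / (p₁ * b^p₂ - p₂ * b^p₁))
            * ((p₂ - 1) * y^(p₂-2) - (p₁ - 1) * y^(p₁-2))
          - (y^(α-2)/σ^4) * ((2*r - σ^2) * (2*r*y + L * (2*σ^2 - 2*r)))) ∧
    StrictConvexOn ℝ (Set.Icc (1:ℝ) b) h := by
  have hp₂neg : p₂ < 0 := hp₂ ▸ lower_root_neg hσ.ne' hlam
  have hp₁one : 1 < p₁ := hp₁ ▸ one_lt_upper_root hr hσ.ne' hlam.le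
  have hb : 0 < b := hL.trans hbL
  have hden : 0 < p₁ * b^p₂ - p₂ * b^p₁ := by
    nlinarith [Real.rpow_pos_of_pos hb p₁, Real.rpow_pos_of_pos hb p₂]
  have hK : 0 < b^α * (b - L) / (p₁ * b^p₂ - p₂ * b^p₁) :=
    div_pos (mul_pos (Real.rpow_pos_of_pos hb α) (sub_pos.2 hbL)) hden
  have hσ2 : 0 < σ^2 := by positivity
  have hα₀ : -1 < α := by rw [hα]; linarith [div_pos (by linarith : 0 < 2*r) hσ2]
  have hα₁ : α < 0 := by rw [hα, sub_neg, div_lt_one hσ2]; linarith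
  have hgap : h = valueGap (b^α * (b - L) / (p₁ * b^p₂ - p₂ * b^p₁)) p₁ p₂ α L := by
    funext y
    rw [hh, hV, Real.rpow_add_one hb.ne', valueGap]
    ring
  have hgain : ∀ y, α * ((α + 1) * y - (α - 1) * L) =
      (2*r - σ^2) * (2*r*y + L * (2*σ^2 - 2*r)) / σ^4 := by
    intro y
    rw [hα]
    field_simp
    ring
  refine ⟨fun y hy => ?_, hgap ▸ valueGap.strictConvexOn hK hp₂neg hp₁one hα₀ hα₁ hL.le
    (convex_Icc 1 b) fun y hy => zero_lt_one.trans_le hy.1⟩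
  convert valueGap.deriv2_pos hK hp₂neg hp₁one hα₀ hα₁ hL.le (zero_lt_one.trans_le hy.1) using 1
  linear_combination y^(α-2) * hgain y

/-- Suppose `r < σ²/2`, `L > 0`, `b > L`, `b > 1`.  Then for every
`y ∈ [1, b]`,
`(b^α (b − L) p₁ p₂/(p₁ b^(p₂) − p₂ b^(p₁)))·((p₂ − 1)y^(p₂−2) − (p₁ − 1)y^(p₁−2))
  − (y^(α−2)/σ⁴)·((2r − σ²)(2ry + L(2σ² − 2r))) > 0`;
in particular `h(y) = V̂(y) − (y − L)y^α` is strictly convex on `[1, b]`. -/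
theorem stmt_10 (r σ lam α p₁ p₂ b L : ℝ) (V h : ℝ → ℝ)
    (hr : 0 < r) (hσ : 0 < σ) (hlam : 0 < lam)
    (hα : α = 2*r/σ^2 - 1)
    (hp₁ : p₁ = ((r + σ^2/2) + Real.sqrt ((r + σ^2/2)^2 + 2*lam*σ^2)) / σ^2)
    (hp₂ : p₂ = ((r + σ^2/2) - Real.sqrt ((r + σ^2/2)^2 + 2*lam*σ^2)) / σ^2)
    (hdrift : r < σ^2/2) (hL : 0 < L) (hbL : L < b) (hb1 : 1 < b)
    (hV : ∀ y : ℝ, V y = ((b^(α+1) - L * b^α) / (p₁ * b^p₂ - p₂ * b^p₁))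
      * (p₁ * y^p₂ - p₂ * y^p₁))
    (hh : ∀ y : ℝ, h y = V y - (y - L) * y^α) :
    (∀ y ∈ Set.Icc (1:ℝ) b,
      0 < (b^α * (b - L) * p₁ * p₂ / (p₁ * b^p₂ - p₂ * b^p₁))
            * ((p₂ - 1) * y^(p₂-2) - (p₁ - 1) * y^(p₁-2))
          - (y^(α-2)/σ^4) * ((2*r - σ^2) * (2*r*y + L * (2*σ^2 - 2*r)))) ∧
    StrictConvexOn ℝ (Set.Icc (1:ℝ) b) h :=
  stmt_10_general r σ lam α p₁ p₂ b L V h hr hσ hlam hα hp₁ hp₂ hdrift hL hbL hV hh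
end
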